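/- arXiv:1611.08140 — 2 statements merged into one kernel-verified Lean document; each statement's English description precedes it below -/
import Mathlib

section
/- Assume κ is strongly inaccessible. Then add(𝓜_κ) = min{𝔟_κ, cov(𝓜_κ)} and cof(𝓜_κ) = max{𝔡_κ, non(𝓜_κ)}. -/
namespace GenCichon

noncomputable section

open Cardinal Set Ordinal

variable (κ : Cardinal.{0})

/-- The ordinals below `κ`, i.e. the cardinal `κ` viewed as a set of ordinals. -/
abbrev Idx : Type 1 := ↥(Set.Iio κ.ord)

/-- The generalized Cantor space `2^κ`. -/
abbrev GenCantor : Type 1 := Idx κ → Bool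

/-- The generalized Baire space `κ^κ`. -/
abbrev GenBaire : Type 1 := Idx κ → Idx κ

/-- The basic open (cylinder) set `[σ]` determined by the element `σ` of `2^{<κ}`
with domain `[0, δ)` (values of `σ` at or above `δ` are irrelevant). -/
def cyl (δ : Ordinal) (σ : Ordinal → Bool) : Set (GenCantor κ) :=
  { x | ∀ β : Idx κ, β.1 < δ → x β = σ β.1 }

/-- `A ⊆ 2^κ` is nowhere dense: every basic open set `[σ]`, `σ ∈ 2^{<κ}`, has a
basic open refinement `[σ'] ⊆ [σ]` disjoint from `A`. -/
def IsNwd (A : Set (GenCantor κ)) : Prop :=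
  ∀ δ < κ.ord, ∀ σ : Ordinal → Bool, ∃ δ', δ ≤ δ' ∧ δ' < κ.ord ∧
    ∃ σ' : Ordinal → Bool, (∀ β < δ, σ' β = σ β) ∧ cyl κ δ' σ' ∩ A = ∅

/-- `A ⊆ 2^κ` is `κ`-meager: a union of `κ` many nowhere dense sets. -/
def IsKMeager (A : Set (GenCantor κ)) : Prop :=
  ∃ B : Idx κ → Set (GenCantor κ), (∀ i, IsNwd κ (B i)) ∧ A = ⋃ i, B i

/-- The covering number of the `κ`-meager ideal. -/
def covM : Cardinal.{1} :=
  sInf { c : Cardinal.{1} | ∃ J : Set (Set (GenCantor κ)),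
    (∀ A ∈ J, IsKMeager κ A) ∧ ⋃₀ J = Set.univ ∧ c = #J }

/-- The uniformity number of the `κ`-meager ideal. -/
def nonM : Cardinal.{1} :=
  sInf { c : Cardinal.{1} | ∃ X : Set (GenCantor κ), ¬ IsKMeager κ X ∧ c = #X }

/-- The additivity number of the `κ`-meager ideal. -/
def addM : Cardinal.{1} :=
  sInf { c : Cardinal.{1} | ∃ J : Set (Set (GenCantor κ)),
    (∀ A ∈ J, IsKMeager κ A) ∧ ¬ IsKMeager κ (⋃₀ J) ∧ c = #J }

/-- The cofinality number of the `κ`-meager ideal. -/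
def cofM : Cardinal.{1} :=
  sInf { c : Cardinal.{1} | ∃ J : Set (Set (GenCantor κ)),
    (∀ A ∈ J, IsKMeager κ A) ∧ (∀ A, IsKMeager κ A → ∃ B ∈ J, A ⊆ B) ∧ c = #J }

/-- `g` eventually dominates `f` (`f <* g`). -/
def EvDom (f g : GenBaire κ) : Prop :=
  ∃ α : Idx κ, ∀ β : Idx κ, α < β → f β < g β

/-- The unbounding number `𝔟_κ`. -/
def bK : Cardinal.{1} :=
  sInf { c : Cardinal.{1} | ∃ F : Set (GenBaire κ),
    (∀ g : GenBaire κ, ∃ f ∈ F, ¬ EvDom κ f g) ∧ c = #F }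

/-- The dominating number `𝔡_κ`. -/
def dK : Cardinal.{1} :=
  sInf { c : Cardinal.{1} | ∃ F : Set (GenBaire κ),
    (∀ g : GenBaire κ, ∃ f ∈ F, EvDom κ g f) ∧ c = #F }

/-- `f` and `g` are eventually different (`f ≠* g`). -/
def EvDiff (f g : GenBaire κ) : Prop :=
  #{ α : Idx κ | f α = g α } < Cardinal.lift.{1} κ

/-- `𝔟_κ(≠*)`: least size of a family such that every `g` is cofinally matching
with some member of it. -/
def bNeq : Cardinal.{1} :=
  sInf { c : Cardinal.{1} | ∃ F : Set (GenBaire κ),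
    (∀ g : GenBaire κ, ∃ f ∈ F, ¬ EvDiff κ f g) ∧ c = #F }

/-- `𝔡_κ(≠*)`: least size of a family such that every `g` is eventually different
from some member of it. -/
def dNeq : Cardinal.{1} :=
  sInf { c : Cardinal.{1} | ∃ F : Set (GenBaire κ),
    (∀ g : GenBaire κ, ∃ f ∈ F, EvDiff κ f g) ∧ c = #F }

/-- An interval partition of `κ`: a strictly increasing continuous sequence
`(pts α : α < κ)` of ordinals below `κ` with `pts 0 = 0`; the `α`-th interval is
`[pts α, pts (α+1))`.  (Values at or above `κ` are normalized to `0`, so that an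
interval partition is determined by its restriction below `κ`.) -/
structure IntervalPartition where
  pts : Ordinal → Ordinal
  zero : pts 0 = 0
  lt_ord : ∀ α < κ.ord, pts α < κ.ord
  strictMono : ∀ α β : Ordinal, α < β → β < κ.ord → pts α < pts β
  isCont : ∀ δ < κ.ord, Order.IsSuccLimit δ → pts δ = ⨆ β : ↥(Set.Iio δ), pts β.1
  eq_zero_of_le : ∀ α, κ.ord ≤ α → pts α = 0

/-- The `β`-th interval of `J` is included in the `α`-th interval of `I`. -/
def SubIntv (J : IntervalPartition κ) (β : Ordinal) (I : IntervalPartition κ)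
    (α : Ordinal) : Prop :=
  I.pts α ≤ J.pts β ∧ J.pts (β + 1) ≤ I.pts (α + 1)

/-- `I` dominates `J` (`J ≤* I`): from some point on, every interval of `I`
contains an interval of `J`. -/
def IPDom (J I : IntervalPartition κ) : Prop :=
  ∃ γ < κ.ord, ∀ α, γ < α → α < κ.ord → ∃ β < κ.ord, SubIntv κ J β I α

/-- `y` matches the `κ`-chopped function `(x, I)`: `y` and `x` agree on cofinally
many intervals of `I`. -/
def Matches (y x : GenCantor κ) (I : IntervalPartition κ) : Prop :=
  ∀ γ < κ.ord, ∃ α, γ ≤ α ∧ α < κ.ord ∧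
    ∀ β : Idx κ, I.pts α ≤ β.1 → β.1 < I.pts (α + 1) → y β = x β

/-- The set of elements of `2^κ` matching the `κ`-chopped function `(x, I)`. -/
def MatchSet (x : GenCantor κ) (I : IntervalPartition κ) : Set (GenCantor κ) :=
  { y | Matches κ y x I }

/-- `h ∈ κ^κ` tends to `κ`: `lim_{α → κ} h(α) = κ`. -/
def TendsToTop (h : GenBaire κ) : Prop :=
  ∀ γ : Idx κ, ∃ α : Idx κ, ∀ β : Idx κ, α ≤ β → γ ≤ h β

/-- `φ` is an `h`-slalom: `φ(α)` is a subset of `κ` of cardinality `|h(α)|`. -/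
def IsSlalom (h : GenBaire κ) (φ : Idx κ → Set (Idx κ)) : Prop :=
  ∀ α : Idx κ, #(φ α) = Cardinal.lift.{1} (h α).1.card

/-- The (total) slalom `φ` localizes `f` (`f ∈* φ`). -/
def Localizes (φ : Idx κ → Set (Idx κ)) (f : GenBaire κ) : Prop :=
  #{ α : Idx κ | f α ∉ φ α } < Cardinal.lift.{1} κ

/-- `𝔟_h(∈*)`. -/
def bLoc (h : GenBaire κ) : Cardinal.{1} :=
  sInf { c : Cardinal.{1} | ∃ F : Set (GenBaire κ),
    (∀ φ : Idx κ → Set (Idx κ), IsSlalom κ h φ → ∃ f ∈ F, ¬ Localizes κ φ f) ∧ c = #F }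

/-- `𝔡_h(∈*)`. -/
def dLoc (h : GenBaire κ) : Cardinal.{1} :=
  sInf { c : Cardinal.{1} | ∃ Φ : Set (Idx κ → Set (Idx κ)),
    (∀ φ ∈ Φ, IsSlalom κ h φ) ∧ (∀ f : GenBaire κ, ∃ φ ∈ Φ, Localizes κ φ f) ∧ c = #Φ }

/-- A partial `h`-slalom: a slalom whose domain is a subset of `κ` of cardinality `κ`.
(The values outside the domain are normalized to `∅`.) -/
structure PartialSlalom (h : GenBaire κ) where
  dom : Set (Idx κ)
  dom_card : #dom = Cardinal.lift.{1} κ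
  fn : Idx κ → Set (Idx κ)
  fn_card : ∀ α ∈ dom, #(fn α) = Cardinal.lift.{1} (h α).1.card
  eq_empty_of_not_mem : ∀ α ∉ dom, fn α = ∅

/-- The partial slalom `φ` localizes `f` (`f ∈* φ`). -/
def PLocalizes {h : GenBaire κ} (φ : PartialSlalom κ h) (f : GenBaire κ) : Prop :=
  #{ α : Idx κ | α ∈ φ.dom ∧ f α ∉ φ.fn α } < Cardinal.lift.{1} κ

/-- `𝔟_h(p∈*)`. -/
def bPLoc (h : GenBaire κ) : Cardinal.{1} :=
  sInf { c : Cardinal.{1} | ∃ F : Set (GenBaire κ),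
    (∀ φ : PartialSlalom κ h, ∃ f ∈ F, ¬ PLocalizes κ φ f) ∧ c = #F }

/-- `𝔡_h(p∈*)`. -/
def dPLoc (h : GenBaire κ) : Cardinal.{1} :=
  sInf { c : Cardinal.{1} | ∃ Φ : Set (PartialSlalom κ h),
    (∀ f : GenBaire κ, ∃ φ ∈ Φ, PLocalizes κ φ f) ∧ c = #Φ }

/-- `X ⊆ 2^κ` is open in the `<κ`-box topology. -/
def IsOpenK (X : Set (GenCantor κ)) : Prop :=
  ∀ x ∈ X, ∃ δ < κ.ord, { y : GenCantor κ | ∀ β : Idx κ, β.1 < δ → y β = x β } ⊆ X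

/-- `X ⊆ 2^κ` is dense: it meets every basic open set. -/
def IsDenseK (X : Set (GenCantor κ)) : Prop :=
  ∀ δ < κ.ord, ∀ σ : Ordinal → Bool, (cyl κ δ σ ∩ X).Nonempty

/-- Coordinatewise addition modulo 2 on `2^κ`. -/
def addMod2 (x y : GenCantor κ) : GenCantor κ := fun α => Bool.xor (x α) (y α)

/-- The identification of `σ ∈ 2^{<κ}` (with domain `[0, δ)`) with the element of
`2^κ` extending `σ` by `0`'s. -/
def extendZero (δ : Ordinal) (σ : Ordinal → Bool) : GenCantor κ :=
  fun α => if α.1 < δ then σ α.1 else false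

end

end GenCichon

/-!
A set `A ⊆ 2^κ` is `κ`-meager iff it is disjoint from a *matching set*: the set of points that
agree with a fixed `x` on cofinally many intervals of an interval partition `I` of `κ`.
Complements of matching sets are clearly `κ`-meager. Conversely, given nowhere dense sets
`(Bᵢ)_{i<κ}`, build `x` and `I` by a fusion of length `κ`: the `α`-th interval is chosen so that
any point copying `x` on it misses `Bᵢ` for all `i < α`, whatever the point is below the
interval. If the interval starts at `δ` these are `2^|δ|·|α| < κ` cases, so strong
inaccessibility lets the interval be built by an inner fusion of fewer than `κ` steps.
Inclusions between matching sets reflect domination between the partitions, which in turn is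
coded by eventual domination in `κ^κ`. So a meager family is covered by one meager set as soon as
the matching sets attached to its members share a point (fewer than `cov(𝓜_κ)` of them) and the
functions attached to these are bounded (fewer than `𝔟_κ`); dually, a cofinal meager family is
obtained from a non-meager set of centres and a dominating family.
-/

namespace Ordinal

lemma mod_two_eq_zero_or_one (μ : Ordinal) : μ % 2 = 0 ∨ μ % 2 = 1 := by
  have hlt : μ % 2 < 1 + 1 := by rw [one_add_one_eq_two]; exact mod_lt μ two_ne_zero
  exact Order.le_one_iff.mp (Order.lt_add_one_iff.mp hlt)

lemma add_one_mod_two_ne (μ : Ordinal) : (μ + 1) % 2 ≠ μ % 2 := by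
  have hdiv := div_add_mod μ 2
  rcases mod_two_eq_zero_or_one μ with h | h <;> rw [h] at hdiv ⊢
  · rw [add_zero] at hdiv
    rw [← hdiv, mul_add_mod_self, mod_eq_of_lt one_lt_two]
    exact one_ne_zero
  · have h2 : μ + 1 = 2 * (μ / 2 + 1) := by
      conv_lhs => rw [← hdiv]
      rw [mul_add, mul_one, add_assoc, one_add_one_eq_two]
    rw [h2, mul_mod]
    exact zero_ne_one

lemma exists_mod_two_eq_of_cofinal {o : Ordinal} {P : Ordinal → Prop}
    (h : ∀ γ < o, ∃ μ, γ < μ ∧ μ < o ∧ P μ) :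
    ∃ r, ∀ γ < o, ∃ μ, γ < μ ∧ μ < o ∧ P μ ∧ μ % 2 = r := by
  by_contra! hr
  obtain ⟨γ₀, hγ₀, h₀⟩ := hr 0
  obtain ⟨γ₁, hγ₁, h₁⟩ := hr 1
  obtain ⟨μ, hμ, hμo, hP⟩ := h _ (max_lt hγ₀ hγ₁)
  rcases mod_two_eq_zero_or_one μ with hμ2 | hμ2
  exacts [h₀ μ ((le_max_left _ _).trans_lt hμ) hμo hP hμ2,
    h₁ μ ((le_max_right _ _).trans_lt hμ) hμo hP hμ2]

end Ordinal

namespace GenCichon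

open Cardinal Set Ordinal

/-- `⟨ℓ, s⟩` stands for the restriction `s ↾ ℓ ∈ 2^{<κ}`: the values of `s` at or above `ℓ`
are irrelevant, and `c ≤ d` means that `d` end-extends `c`. -/
structure Cond where
  len : Ordinal.{0}
  val : Ordinal.{0} → Bool

namespace Cond

instance : Preorder Cond where
  le c d := c.len ≤ d.len ∧ ∀ β < c.len, d.val β = c.val β
  le_refl _ := ⟨le_rfl, fun _ _ => rfl⟩
  le_trans _ _ _ hab hbc :=
    ⟨hab.1.trans hbc.1, fun β hβ => (hbc.2 β (hβ.trans_le hab.1)).trans (hab.2 β hβ)⟩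

instance : OrderBot Cond where
  bot := ⟨0, fun _ => false⟩
  bot_le _ := ⟨zero_le, fun _ h => (not_lt_zero h).elim⟩

lemma len_le_len {c d : Cond} (h : c ≤ d) : c.len ≤ d.len := h.1

lemma val_eq_of_le {c d : Cond} (h : c ≤ d) {β : Ordinal.{0}} (hβ : β < c.len) :
    d.val β = c.val β :=
  h.2 β hβ

open Classical in
noncomputable def glue (ℓ : Ordinal.{0}) (C : ∀ ζ < ℓ, Cond) : Cond where
  len := ⨆ ζ : Iio ℓ, (C ζ ζ.2).len
  val β := if h : ∃ ζ : Iio ℓ, β < (C ζ ζ.2).len then (C _ h.choose.2).val β else false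

lemma le_glue {ℓ : Ordinal.{0}} {C : ∀ ζ < ℓ, Cond}
    (hC : ∀ ζ ξ (hζ : ζ < ℓ) (hξ : ξ < ℓ), ζ ≤ ξ → C ζ hζ ≤ C ξ hξ) (ζ : Ordinal.{0})
    (hζ : ζ < ℓ) : C ζ hζ ≤ glue ℓ C := by
  refine ⟨le_ciSup Ordinal.bddAbove_of_small (⟨ζ, hζ⟩ : Iio ℓ), fun β hβ => ?_⟩
  have hex : ∃ ξ : Iio ℓ, β < (C ξ ξ.2).len := ⟨⟨ζ, hζ⟩, hβ⟩
  simp only [glue, dif_pos hex]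
  rcases le_total ζ hex.choose with h | h
  · exact val_eq_of_le (hC _ _ hζ hex.choose.2 h) hβ
  · exact (val_eq_of_le (hC _ _ hex.choose.2 hζ h) hex.choose_spec).symm

end Cond

structure FusionStep (κ : Cardinal.{0}) where
  next : Ordinal.{0} → Cond → Cond
  le_next : ∀ ζ c, c ≤ next ζ c
  len_lt_next : ∀ ζ c, c.len < (next ζ c).len
  next_lt_ord : ∀ ζ c, c.len < κ.ord → (next ζ c).len < κ.ord

section
variable {κ : Cardinal.{0}}

lemma add_one_lt_ord (hκ : ℵ₀ ≤ κ) {α : Ordinal.{0}} (hα : α < κ.ord) : α + 1 < κ.ord :=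
  (isSuccLimit_ord hκ).add_one_lt hα

lemma iSup_Iio_lt_ord (hreg : κ.IsRegular) {ℓ : Ordinal.{0}} (hℓ : ℓ < κ.ord)
    {f : Iio ℓ → Ordinal.{0}} (hf : ∀ ζ, f ζ < κ.ord) : ⨆ ζ, f ζ < κ.ord := by
  refine Ordinal.lift_iSup_lt_of_lt_cof ?_ hf
  rw [Cardinal.mk_Iio_ordinal, Cardinal.lift_lift, ← lift_cof, hreg.cof_ord]
  exact lift_lt.mpr (lt_ord.mp hℓ)

namespace FusionStep

lemma exists_of_forall_exists (hκ : ℵ₀ ≤ κ) {o : Ordinal.{0}}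
    {P : Ordinal.{0} → Cond → Cond → Prop}
    (hP : ∀ ζ < o, ∀ c : Cond, c.len < κ.ord →
      ∃ d, c ≤ d ∧ c.len < d.len ∧ d.len < κ.ord ∧ P ζ c d) :
    ∃ S : FusionStep κ, ∀ ζ < o, ∀ c : Cond, c.len < κ.ord → P ζ c (S.next ζ c) := by
  classical
  choose! D hD using hP
  let next (ζ : Ordinal.{0}) (c : Cond) : Cond :=
    if ζ < o ∧ c.len < κ.ord then D ζ c else ⟨c.len + 1, c.val⟩
  refine ⟨⟨next, fun ζ c => ?_, fun ζ c => ?_, fun ζ c hc => ?_⟩, fun ζ hζ c hc => ?_⟩ <;>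
    simp only [next]
  · split_ifs with h
    exacts [(hD ζ h.1 c h.2).1, ⟨(lt_add_one _).le, fun _ _ => rfl⟩]
  · split_ifs with h
    exacts [(hD ζ h.1 c h.2).2.1, lt_add_one _]
  · split_ifs with h
    exacts [(hD ζ h.1 c h.2).2.2.1, add_one_lt_ord hκ hc]
  · rw [if_pos ⟨hζ, hc⟩]
    exact (hD ζ hζ c hc).2.2.2

variable (S : FusionStep κ) (c₀ : Cond)

noncomputable def run : Ordinal.{0} → Cond := fun o =>
  Ordinal.limitRecOn (motive := fun _ => Cond) o c₀ (fun ζ c => S.next ζ c)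
    (fun ℓ _ C => Cond.glue ℓ C)

@[simp] lemma run_zero : S.run c₀ 0 = c₀ := Ordinal.limitRecOn_zero ..

lemma run_add_one (ζ : Ordinal.{0}) : S.run c₀ (ζ + 1) = S.next ζ (S.run c₀ ζ) :=
  Ordinal.limitRecOn_add_one ..

lemma run_of_isSuccLimit {ℓ : Ordinal.{0}} (hℓ : Order.IsSuccLimit ℓ) :
    S.run c₀ ℓ = Cond.glue ℓ (fun ζ _ => S.run c₀ ζ) :=
  Ordinal.limitRecOn_limit _ _ _ _ hℓ

lemma monotone_run : Monotone (S.run c₀) := by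
  intro ζ ξ hζξ
  induction ξ using Ordinal.limitRecOn generalizing ζ with
  | zero => rw [nonpos_iff_eq_zero.mp hζξ]
  | add_one ξ ih =>
    rcases Order.le_succ_iff_eq_or_le.mp hζξ with rfl | hζξ
    · exact le_rfl
    · exact (ih hζξ).trans (S.run_add_one c₀ ξ ▸ S.le_next _ _)
  | limit ℓ hℓ ih =>
    rcases hζξ.eq_or_lt with rfl | hζℓ
    · exact le_rfl
    · rw [S.run_of_isSuccLimit c₀ hℓ]
      exact Cond.le_glue (fun _ b _ hb hab => ih b hb hab) ζ hζℓ

lemma strictMono_len_run : StrictMono fun ζ => (S.run c₀ ζ).len := by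
  intro ζ ξ hζξ
  calc (S.run c₀ ζ).len < (S.run c₀ (ζ + 1)).len := by
        rw [S.run_add_one]; exact S.len_lt_next _ _
    _ ≤ (S.run c₀ ξ).len :=
        Cond.len_le_len (S.monotone_run c₀ (Order.add_one_le_of_lt hζξ))

lemma le_run {ζ : Ordinal.{0}} : c₀ ≤ S.run c₀ ζ :=
  (S.run_zero c₀).ge.trans (S.monotone_run c₀ zero_le)

lemma len_lt_len_run {ζ : Ordinal.{0}} (hζ : 0 < ζ) : c₀.len < (S.run c₀ ζ).len :=
  (congrArg Cond.len (S.run_zero c₀)).ge.trans_lt (S.strictMono_len_run c₀ hζ)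

lemma len_run_lt_ord (hreg : κ.IsRegular) (hc₀ : c₀.len < κ.ord) {ζ : Ordinal.{0}}
    (hζ : ζ < κ.ord) : (S.run c₀ ζ).len < κ.ord := by
  induction ζ using Ordinal.limitRecOn with
  | zero => rwa [run_zero]
  | add_one ζ ih =>
    rw [run_add_one]
    exact S.next_lt_ord _ _ (ih ((lt_add_one ζ).trans hζ))
  | limit ℓ hℓ ih =>
    rw [S.run_of_isSuccLimit c₀ hℓ]
    exact iSup_Iio_lt_ord hreg hζ fun ξ => ih ξ ξ.2 (ξ.2.trans hζ)

end FusionStep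

namespace IntervalPartition
variable (I : IntervalPartition κ)

lemma strictMono_pts : StrictMono fun α : Idx κ => (⟨I.pts α, I.lt_ord α α.2⟩ : Idx κ) :=
  fun α β h => I.strictMono α β h β.2

lemma le_pts {α : Ordinal.{0}} (hα : α < κ.ord) : α ≤ I.pts α :=
  I.strictMono_pts.le_apply (x := ⟨α, hα⟩)

lemma pts_lt_pts_iff {α β : Ordinal.{0}} (hα : α < κ.ord) (hβ : β < κ.ord) :
    I.pts α < I.pts β ↔ α < β :=
  I.strictMono_pts.lt_iff_lt (a := ⟨α, hα⟩) (b := ⟨β, hβ⟩)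

lemma pts_le_pts_iff {α β : Ordinal.{0}} (hα : α < κ.ord) (hβ : β < κ.ord) :
    I.pts α ≤ I.pts β ↔ α ≤ β :=
  I.strictMono_pts.le_iff_le (a := ⟨α, hα⟩) (b := ⟨β, hβ⟩)

def rightEnd (hκ : ℵ₀ ≤ κ) : GenBaire κ :=
  fun β => ⟨I.pts (β.1 + 1), I.lt_ord _ (add_one_lt_ord hκ β.2)⟩

def Outruns (g : GenBaire κ) : Prop :=
  ∀ α < κ.ord, ∀ β : Idx κ, β.1 ≤ I.pts α → (g β).1 < I.pts (α + 1)

noncomputable def ofFusion (hreg : κ.IsRegular) (S : FusionStep κ) : IntervalPartition κ where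
  pts α := if α < κ.ord then (S.run ⊥ α).len else 0
  zero := by simp [(isSuccLimit_ord hreg.aleph0_le).pos]; rfl
  lt_ord α hα := by
    simpa [hα] using S.len_run_lt_ord ⊥ hreg (isSuccLimit_ord hreg.aleph0_le).pos hα
  strictMono α β hαβ hβ := by
    simpa [hβ, hαβ.trans hβ] using S.strictMono_len_run ⊥ hαβ
  isCont δ hδ hlim := by
    simp only [if_pos hδ, S.run_of_isSuccLimit ⊥ hlim]
    exact iSup_congr fun ζ => (if_pos (ζ.2.trans hδ)).symm
  eq_zero_of_le α h := if_neg (not_lt.mpr h)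

lemma ofFusion_pts (hreg : κ.IsRegular) (S : FusionStep κ) {α : Ordinal.{0}}
    (hα : α < κ.ord) : (ofFusion hreg S).pts α = (S.run ⊥ α).len :=
  if_pos hα

end IntervalPartition

lemma exists_lt_ord_forall_le_lt (hreg : κ.IsRegular) (g : GenBaire κ) {δ : Ordinal.{0}}
    (hδ : δ < κ.ord) : ∃ ε < κ.ord, ∀ β : Idx κ, β.1 ≤ δ → (g β).1 < ε := by
  have hκ := hreg.aleph0_le
  let G (β : Ordinal.{0}) : Ordinal.{0} := if h : β < κ.ord then (g ⟨β, h⟩).1 + 1 else 0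
  have hG : ∀ β, G β < κ.ord := fun β => by
    unfold G; split_ifs
    exacts [add_one_lt_ord hκ (g _).2, (isSuccLimit_ord hκ).pos]
  refine ⟨⨆ β : Iio (δ + 1), G β, iSup_Iio_lt_ord hreg (add_one_lt_ord hκ hδ) fun β => hG β,
    fun β hβ => ?_⟩
  have hle : G β ≤ ⨆ ζ : Iio (δ + 1), G ζ :=
    le_ciSup (f := fun ζ : Iio (δ + 1) => G ζ) Ordinal.bddAbove_of_small
      ⟨β.1, Order.lt_add_one_iff.mpr hβ⟩
  rw [show G β = (g β).1 + 1 from dif_pos β.2] at hle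
  exact (lt_add_one _).trans_le hle

lemma IntervalPartition.exists_outruns (hreg : κ.IsRegular) (g : GenBaire κ) :
    ∃ I : IntervalPartition κ, I.Outruns g := by
  have hκ := hreg.aleph0_le
  obtain ⟨S, hS⟩ := FusionStep.exists_of_forall_exists hκ (o := κ.ord)
    (P := fun _ c d => ∀ β : Idx κ, β.1 ≤ c.len → (g β).1 < d.len) fun _ _ c hc => by
      obtain ⟨ε, hε, hgε⟩ := exists_lt_ord_forall_le_lt hreg g hc
      exact ⟨⟨max (c.len + 1) ε, c.val⟩,
        ⟨(lt_add_one _).le.trans (le_max_left _ _), fun _ _ => rfl⟩,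
        (lt_add_one _).trans_le (le_max_left _ _), max_lt (add_one_lt_ord hκ hc) hε,
        fun β hβ => (hgε β hβ).trans_le (le_max_right _ _)⟩
  refine ⟨.ofFusion hreg S, fun α hα β hβ => ?_⟩
  rw [IntervalPartition.ofFusion_pts _ _ hα] at hβ
  rw [IntervalPartition.ofFusion_pts _ _ (add_one_lt_ord hκ hα), FusionStep.run_add_one]
  exact hS α hα _ (S.len_run_lt_ord ⊥ hreg (isSuccLimit_ord hκ).pos hα) β hβ

lemma IsNwd.mono {A B : Set (GenCantor κ)} (hA : IsNwd κ A) (hBA : B ⊆ A) : IsNwd κ B := by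
  intro δ hδ σ
  obtain ⟨δ', h1, h2, σ', h3, h4⟩ := hA δ hδ σ
  exact ⟨δ', h1, h2, σ', h3, subset_empty_iff.mp (h4 ▸ inter_subset_inter_right _ hBA)⟩

lemma IsKMeager.mono {A B : Set (GenCantor κ)} (hA : IsKMeager κ A) (hBA : B ⊆ A) :
    IsKMeager κ B := by
  obtain ⟨C, hC, rfl⟩ := hA
  refine ⟨fun i => C i ∩ B, fun i => (hC i).mono inter_subset_left, ?_⟩
  rw [← iUnion_inter, inter_eq_right.mpr hBA]

lemma isNwd_singleton (hκ : ℵ₀ ≤ κ) (z : GenCantor κ) : IsNwd κ {z} := by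
  classical
  intro δ hδ σ
  refine ⟨δ + 1, (lt_add_one δ).le, add_one_lt_ord hκ hδ,
    fun β => if β = δ then !z ⟨δ, hδ⟩ else σ β, fun β hβ => if_neg hβ.ne, ?_⟩
  refine eq_empty_of_forall_notMem fun w ⟨hw, hwz⟩ => ?_
  have : w ⟨δ, hδ⟩ = !z ⟨δ, hδ⟩ := by simpa using hw ⟨δ, hδ⟩ (lt_add_one δ)
  rw [mem_singleton_iff.mp hwz] at this
  exact Bool.not_ne_self _ this.symm

lemma isKMeager_of_mk_le (hκ : ℵ₀ ≤ κ) {X : Set (GenCantor κ)} (hX : #X ≤ lift.{1} κ) :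
    IsKMeager κ X := by
  obtain ⟨f⟩ : Nonempty (X ↪ Idx κ) := by
    rwa [← le_def, Cardinal.mk_Iio_ordinal, card_ord]
  refine ⟨fun i => Subtype.val '' (f ⁻¹' {i}), fun i => ?_, ?_⟩
  · rcases (((subsingleton_singleton (a := i)).preimage f.injective).image
      Subtype.val).eq_empty_or_singleton with h | ⟨z, h⟩ <;> simp only [h]
    exacts [(isNwd_singleton hκ fun _ => false).mono (empty_subset _), isNwd_singleton hκ z]
  · ext z
    simpa using ⟨fun hz => ⟨_, (f ⟨z, hz⟩).2, hz, rfl⟩, fun ⟨_, _, hz, _⟩ => hz⟩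

lemma isKMeager_singleton (hκ : ℵ₀ ≤ κ) (x : GenCantor κ) : IsKMeager κ {x} :=
  isKMeager_of_mk_le hκ (by rw [mk_singleton]; exact one_le_aleph0.trans (aleph0_le_lift.mpr hκ))

lemma mem_matchSet_self (x : GenCantor κ) (I : IntervalPartition κ) : x ∈ MatchSet κ x I :=
  fun γ hγ => ⟨γ, le_rfl, hγ, fun _ _ _ => rfl⟩

lemma isKMeager_compl_matchSet (hκ : ℵ₀ ≤ κ) (x : GenCantor κ) (I : IntervalPartition κ) :
    IsKMeager κ (MatchSet κ x I)ᶜ := by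
  refine ⟨fun γ => {y | ∀ α, γ.1 ≤ α → α < κ.ord →
    ¬ ∀ β : Idx κ, I.pts α ≤ β.1 → β.1 < I.pts (α + 1) → y β = x β}, fun γ δ hδ σ => ?_, ?_⟩
  · -- the basic open set copying `x` on the interval `max γ δ` of `I` misses the `γ`-th piece
    set α := max γ.1 δ
    have hα : α < κ.ord := max_lt γ.2 hδ
    have hδα : δ ≤ I.pts α := (le_max_right _ _).trans (I.le_pts hα)
    have hα1 := add_one_lt_ord hκ hα
    refine ⟨I.pts (α + 1), hδα.trans (I.strictMono _ _ (lt_add_one α) hα1).le, I.lt_ord _ hα1,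
      fun β => if β < δ then σ β else if h : β < κ.ord then x ⟨β, h⟩ else false,
      fun β hβ => if_pos hβ, ?_⟩
    refine eq_empty_of_forall_notMem fun z ⟨hz, hzN⟩ =>
      hzN α (le_max_left _ _) hα fun β h1 h2 => ?_
    rw [hz β h2]
    dsimp only
    rw [if_neg (not_lt.mpr (hδα.trans h1)), dif_pos (show β.1 < κ.ord from β.2)]
  · ext y
    simp [MatchSet, Matches]

def Cond.AvoidsAbove (d : Cond) (δ : Ordinal.{0}) (A : Set (GenCantor κ)) : Prop :=
  ∀ y : GenCantor κ, (∀ β : Idx κ, δ ≤ β.1 → β.1 < d.len → y β = d.val β.1) → y ∉ A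

lemma Cond.AvoidsAbove.mono {c d : Cond} {δ : Ordinal.{0}} {A : Set (GenCantor κ)}
    (h : c.AvoidsAbove δ A) (hcd : c ≤ d) : d.AvoidsAbove δ A :=
  fun y hy => h y fun β h1 h2 => (hy β h1 (h2.trans_le hcd.1)).trans (hcd.2 β h2)

lemma IsNwd.exists_avoidsAbove (hκ : ℵ₀ ≤ κ) {B : Set (GenCantor κ)} (hB : IsNwd κ B)
    {δ : Ordinal.{0}} (hδ : δ < κ.ord) (s : Ordinal.{0} → Bool) {c : Cond}
    (hc : c.len < κ.ord) :
    ∃ d, c ≤ d ∧ c.len < d.len ∧ d.len < κ.ord ∧ d.AvoidsAbove δ (B ∩ cyl κ δ s) := by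
  obtain ⟨δ', hδ', hδ'κ, σ', hσ', hdisj⟩ :=
    hB (max δ c.len) (max_lt hδ hc) fun β => if β < δ then s β else c.val β
  refine ⟨⟨max δ' (c.len + 1), fun β => if β < δ then c.val β else σ' β⟩,
    ⟨(lt_add_one _).le.trans (le_max_right _ _), fun β hβ => ?_⟩,
    (lt_add_one _).trans_le (le_max_right _ _), max_lt hδ'κ (add_one_lt_ord hκ hc), ?_⟩
  · dsimp only
    split_ifs with h
    · rfl
    · rw [hσ' β (hβ.trans_le (le_max_right _ _)), if_neg h]
  · rintro y hy ⟨hyB, hys⟩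
    refine (eq_empty_iff_forall_notMem.mp hdisj) y ⟨fun β hβ => ?_, hyB⟩
    by_cases h : β.1 < δ
    · rw [hys β h, hσ' β.1 (h.trans_le (le_max_left _ _)), if_pos h]
    · rw [hy β (not_lt.mp h) (hβ.trans_le (le_max_left _ _))]
      exact if_neg h

lemma exists_equiv_Iio_of_mk_lt {T : Type 1} (hT : #T < lift.{1} κ) :
    ∃ o < κ.ord, Nonempty (Iio o ≃ T) := by
  obtain ⟨c, hc, hcT⟩ := lt_lift_iff.mp hT
  exact ⟨c.ord, ord_lt_ord.mpr hc,
    Cardinal.eq.mp (by rw [Cardinal.mk_Iio_ordinal, card_ord, hcT])⟩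

lemma exists_avoidsAbove_of_isInaccessible (hinacc : κ.IsInaccessible)
    {B : Idx κ → Set (GenCantor κ)} (hB : ∀ i, IsNwd κ (B i)) {α : Ordinal.{0}}
    (hα : α < κ.ord) {c : Cond} (hc : c.len < κ.ord) :
    ∃ d, c ≤ d ∧ c.len < d.len ∧ d.len < κ.ord ∧
      ∀ i : Idx κ, i.1 < α → d.AvoidsAbove c.len (B i) := by
  have hreg := hinacc.isRegular
  have hκ := hreg.aleph0_le
  set δ := c.len
  -- one step of the fusion per pair (point below `δ`, index below `α`): fewer than `κ` steps
  let T := (Iio δ → Bool) × Iio α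
  have hT : #T < lift.{1} κ := by
    have := mul_lt_of_lt hκ (hinacc.isStrongPrelimit (lt_ord.mp hc)) (lt_ord.mp hα)
    calc #T = Cardinal.lift.{1} (2 ^ δ.card * α.card) := by
          simp only [T, mk_prod, Cardinal.lift_id, mk_arrow, Cardinal.mk_Iio_ordinal, mk_fintype,
            Fintype.card_bool, Nat.cast_ofNat, Cardinal.lift_mul, Cardinal.lift_power,
            Cardinal.lift_ofNat, Cardinal.lift_lift]
      _ < Cardinal.lift.{1} κ := Cardinal.lift_lt.mpr this
  obtain ⟨o, ho, ⟨e⟩⟩ := exists_equiv_Iio_of_mk_lt hT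
  let extend (σ : Iio δ → Bool) (β : Ordinal.{0}) : Bool :=
    if h : β < δ then σ ⟨β, h⟩ else false
  let toIdx (i : Iio α) : Idx κ := ⟨i.1, i.2.trans hα⟩
  obtain ⟨S, hS⟩ := FusionStep.exists_of_forall_exists hκ (o := o)
    (P := fun ζ _ d => ∀ hζ : ζ < o,
      d.AvoidsAbove δ (B (toIdx (e ⟨ζ, hζ⟩).2) ∩ cyl κ δ (extend (e ⟨ζ, hζ⟩).1)))
    fun ζ hζ c' hc' => by
      obtain ⟨d, hd⟩ := (hB (toIdx (e ⟨ζ, hζ⟩).2)).exists_avoidsAbove hκ hc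
        (extend (e ⟨ζ, hζ⟩).1) hc'
      exact ⟨d, hd.1, hd.2.1, hd.2.2.1, fun _ => hd.2.2.2⟩
  have hlen : ∀ ζ < κ.ord, (S.run c ζ).len < κ.ord := fun ζ => S.len_run_lt_ord c hreg hc
  refine ⟨S.run c (o + 1), S.le_run c, S.len_lt_len_run c (Order.lt_add_one_iff.mpr zero_le),
    hlen _ (add_one_lt_ord hκ ho), fun i hi y hy hyB => ?_⟩
  let ζ := e.symm (fun β => y ⟨β.1, β.2.trans hc⟩, ⟨i.1, hi⟩)
  have hζ := hS ζ ζ.2 _ (hlen ζ (ζ.2.trans ho)) ζ.2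
  rw [← S.run_add_one, show (⟨ζ.1, ζ.2⟩ : Iio o) = ζ from rfl, e.apply_symm_apply] at hζ
  have hle : S.run c (ζ + 1) ≤ S.run c (o + 1) :=
    S.monotone_run c ((Order.add_one_le_of_lt ζ.2).trans (lt_add_one o).le)
  exact hζ.mono hle y hy ⟨hyB, fun β hβ => by simp [extend, hβ]⟩

theorem IsKMeager.exists_subset_compl_matchSet (hinacc : κ.IsInaccessible)
    {A : Set (GenCantor κ)} (hA : IsKMeager κ A) :
    ∃ (x : GenCantor κ) (I : IntervalPartition κ), A ⊆ (MatchSet κ x I)ᶜ := by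
  obtain ⟨B, hB, rfl⟩ := hA
  have hreg := hinacc.isRegular
  have hκ := hreg.aleph0_le
  obtain ⟨S, hS⟩ := FusionStep.exists_of_forall_exists hκ (o := κ.ord)
    (P := fun α c d => ∀ i : Idx κ, i.1 < α → d.AvoidsAbove c.len (B i))
    fun _ hα _ hc => exists_avoidsAbove_of_isInaccessible hinacc hB hα hc
  have hlen : ∀ α < κ.ord, (S.run ⊥ α).len < κ.ord :=
    fun _ => S.len_run_lt_ord ⊥ hreg (isSuccLimit_ord hκ).pos
  -- `x` is the union of the whole fusion sequence, the `α`-th interval is the `α`-th step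
  refine ⟨fun β => (S.run ⊥ κ.ord).val β.1, .ofFusion hreg S, fun y hyB hyM => ?_⟩
  obtain ⟨i, hyi⟩ := mem_iUnion.mp hyB
  obtain ⟨α, hiα, hα, hagree⟩ := hyM (i.1 + 1) (add_one_lt_ord hκ i.2)
  have hα1 := add_one_lt_ord hκ hα
  refine hS α hα _ (hlen α hα) i ((lt_add_one _).trans_le hiα) y (fun β h1 h2 => ?_) hyi
  rw [← S.run_add_one] at h2 ⊢
  rw [hagree β (by rwa [IntervalPartition.ofFusion_pts _ _ hα])
    (by rwa [IntervalPartition.ofFusion_pts _ _ hα1])]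
  exact Cond.val_eq_of_le (S.monotone_run ⊥ hα1.le) h2

lemma not_isKMeager_univ (hinacc : κ.IsInaccessible) :
    ¬ IsKMeager κ (univ : Set (GenCantor κ)) := fun h => by
  obtain ⟨x, I, hxI⟩ := h.exists_subset_compl_matchSet hinacc
  exact hxI (mem_univ x) (mem_matchSet_self x I)

lemma exists_matchSet_subset_of_evDom (hreg : κ.IsRegular) {x y : GenCantor κ}
    {I : IntervalPartition κ} (hy : y ∈ MatchSet κ x I) :
    ∃ h : GenBaire κ, ∀ (g : GenBaire κ) (L : IntervalPartition κ), EvDom κ h g →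
      L.Outruns g → MatchSet κ y L ⊆ MatchSet κ x I := by
  have hκ := hreg.aleph0_le
  choose a hβa ha hagree using fun β : Idx κ => hy β.1 β.2
  refine ⟨fun β => ⟨I.pts (a β + 1), I.lt_ord _ (add_one_lt_ord hκ (ha β))⟩,
    fun g L ⟨γ₀, hγ₀⟩ hL z hz γ hγ => ?_⟩
  obtain ⟨μ, hμ, hμκ, hzy⟩ := hz (max (γ₀.1 + 1) (I.pts γ + 1))
    (max_lt (add_one_lt_ord hκ γ₀.2) (add_one_lt_ord hκ (I.lt_ord γ hγ)))
  -- the `μ`-th interval of `L` contains the `a β`-th interval of `I`, `β` its left end point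
  let β : Idx κ := ⟨L.pts μ, L.lt_ord μ hμκ⟩
  have hμβ : μ ≤ β.1 := L.le_pts hμκ
  have h1 : L.pts μ ≤ I.pts (a β) := (hβa β).trans (I.le_pts (ha β))
  have hγ₀β : γ₀ < β := ((lt_add_one γ₀.1).trans_le (le_max_left _ _)).trans_le (hμ.trans hμβ)
  have h2 : I.pts (a β + 1) < L.pts (μ + 1) := lt_trans (hγ₀ β hγ₀β) (hL μ hμκ β le_rfl)
  refine ⟨a β, ((I.pts_lt_pts_iff hγ (ha β)).mp ?_).le, ha β, fun ξ hξ1 hξ2 => ?_⟩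
  · exact ((lt_add_one _).trans_le (le_max_right _ _)).trans_le ((hμ.trans hμβ).trans h1)
  · rw [hzy ξ (h1.trans hξ1) (hξ2.trans h2), hagree β ξ hξ1 hξ2]

lemma ipDom_of_matchSet_subset (hκ : ℵ₀ ≤ κ) {x y : GenCantor κ} {I K : IntervalPartition κ}
    (h : MatchSet κ y K ⊆ MatchSet κ x I) : IPDom κ I K := by
  by_contra hnot
  -- a cofinal set of bad intervals of `K` of one parity, so no two of them are adjacent
  obtain ⟨r, hr⟩ := Ordinal.exists_mod_two_eq_of_cofinal
    (P := fun μ => ∀ α < κ.ord, ¬ SubIntv κ I α K μ) (by simpa [IPDom] using hnot)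
  let U (ξ : Ordinal.{0}) : Prop := ∃ μ, (μ < κ.ord ∧ (∀ α < κ.ord, ¬ SubIntv κ I α K μ) ∧
    μ % 2 = r) ∧ K.pts μ ≤ ξ ∧ ξ < K.pts (μ + 1)
  classical
  let y' : GenCantor κ := fun ξ => if U ξ.1 then y ξ else !x ξ
  have hU : ∀ ξ : Idx κ, y' ξ = x ξ → U ξ.1 := fun ξ hξ => by
    by_contra hn
    simp [y', hn] at hξ
  have hy' : y' ∈ MatchSet κ y K := fun γ hγ => by
    obtain ⟨μ, hγμ, hμ⟩ := hr γ hγ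
    exact ⟨μ, hγμ.le, hμ.1, fun ξ h1 h2 => if_pos ⟨μ, hμ, h1, h2⟩⟩
  obtain ⟨α, -, hα, hagree⟩ := h hy' 0 (isSuccLimit_ord hκ).pos
  have hα1 := add_one_lt_ord hκ hα
  -- the `α`-th interval of `I` starts in a bad interval `μ₀` of `K`, so it reaches `μ₀ + 1`
  obtain ⟨μ₀, ⟨hμ₀, hbad₀, hr₀⟩, h01, h02⟩ := hU ⟨I.pts α, I.lt_ord α hα⟩
    (hagree _ le_rfl (I.strictMono _ _ (lt_add_one α) hα1))
  have hμ₀1 := add_one_lt_ord hκ hμ₀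
  have hlt : K.pts (μ₀ + 1) < I.pts (α + 1) := not_le.mp fun hle => hbad₀ α hα ⟨h01, hle⟩
  obtain ⟨μ₁, ⟨hμ₁, -, hr₁⟩, h11, h12⟩ := hU ⟨K.pts (μ₀ + 1), K.lt_ord _ hμ₀1⟩
    (hagree _ h02.le hlt)
  have : μ₁ = μ₀ + 1 := le_antisymm ((K.pts_le_pts_iff hμ₁ hμ₀1).mp h11)
    (Order.lt_add_one_iff.mp ((K.pts_lt_pts_iff hμ₀1 (add_one_lt_ord hκ hμ₁)).mp h12))
  exact Ordinal.add_one_mod_two_ne μ₀ (this ▸ hr₁.trans hr₀.symm)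

lemma IntervalPartition.Outruns.evDom_rightEnd (hκ : ℵ₀ ≤ κ) {L K : IntervalPartition κ}
    {f : GenBaire κ} (hL : L.Outruns f) (h : IPDom κ L K) : EvDom κ f (K.rightEnd hκ) := by
  obtain ⟨γ, hγ, hdom⟩ := h
  refine ⟨⟨γ, hγ⟩, fun β hβ => ?_⟩
  obtain ⟨α, hα, h1, h2⟩ := hdom β.1 hβ β.2
  exact (hL α hα β ((K.le_pts β.2).trans h1)).trans_le h2

lemma bK_le_mk {F : Set (GenBaire κ)} (hF : ∀ g, ∃ f ∈ F, ¬ EvDom κ f g) : bK κ ≤ #F :=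
  csInf_le' ⟨F, hF, rfl⟩

lemma dK_le_mk {F : Set (GenBaire κ)} (hF : ∀ g, ∃ f ∈ F, EvDom κ g f) : dK κ ≤ #F :=
  csInf_le' ⟨F, hF, rfl⟩

lemma nonM_le_mk {X : Set (GenCantor κ)} (hX : ¬ IsKMeager κ X) : nonM κ ≤ #X :=
  csInf_le' ⟨X, hX, rfl⟩

lemma covM_le_mk {J : Set (Set (GenCantor κ))} (hJ : ∀ A ∈ J, IsKMeager κ A)
    (hu : ⋃₀ J = Set.univ) : covM κ ≤ #J :=
  csInf_le' ⟨J, hJ, hu, rfl⟩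

lemma addM_le_mk {J : Set (Set (GenCantor κ))} (hJ : ∀ A ∈ J, IsKMeager κ A)
    (hu : ¬ IsKMeager κ (⋃₀ J)) : addM κ ≤ #J :=
  csInf_le' ⟨J, hJ, hu, rfl⟩

lemma cofM_le_mk {J : Set (Set (GenCantor κ))} (hJ : ∀ A ∈ J, IsKMeager κ A)
    (hcof : ∀ A, IsKMeager κ A → ∃ B ∈ J, A ⊆ B) : cofM κ ≤ #J :=
  csInf_le' ⟨J, hJ, hcof, rfl⟩

lemma exists_evDom_of_mk_lt_bK {F : Set (GenBaire κ)} (hF : #F < bK κ) :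
    ∃ g, ∀ f ∈ F, EvDom κ f g := by
  by_contra! h
  exact hF.not_ge (bK_le_mk h)

lemma sUnion_ne_univ_of_mk_lt_covM {J : Set (Set (GenCantor κ))}
    (hJ : ∀ A ∈ J, IsKMeager κ A) (hcov : #J < covM κ) : ⋃₀ J ≠ Set.univ :=
  fun hu => hcov.not_ge (covM_le_mk hJ hu)

lemma exists_dominating_mk_eq_dK (hκ : ℵ₀ ≤ κ) :
    ∃ F : Set (GenBaire κ), (∀ g, ∃ f ∈ F, EvDom κ g f) ∧ dK κ = #F :=
  csInf_mem (s := {c | ∃ F : Set (GenBaire κ), (∀ g, ∃ f ∈ F, EvDom κ g f) ∧ c = #F})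
    ⟨_, Set.univ, fun g => ⟨fun β => ⟨(g β).1 + 1, add_one_lt_ord hκ (g β).2⟩, trivial,
      ⟨⟨0, (isSuccLimit_ord hκ).pos⟩, fun β _ => lt_add_one (g β).1⟩⟩, rfl⟩

lemma exists_not_isKMeager_mk_eq_nonM (hinacc : κ.IsInaccessible) :
    ∃ X : Set (GenCantor κ), ¬ IsKMeager κ X ∧ nonM κ = #X :=
  csInf_mem (s := {c | ∃ X : Set (GenCantor κ), ¬ IsKMeager κ X ∧ c = #X})
    ⟨_, Set.univ, not_isKMeager_univ hinacc, rfl⟩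

lemma exists_cover_mk_eq_covM (hκ : ℵ₀ ≤ κ) :
    ∃ J : Set (Set (GenCantor κ)), (∀ A ∈ J, IsKMeager κ A) ∧ ⋃₀ J = Set.univ ∧ covM κ = #J :=
  csInf_mem (s := {c | ∃ J : Set (Set (GenCantor κ)),
      (∀ A ∈ J, IsKMeager κ A) ∧ ⋃₀ J = Set.univ ∧ c = #J})
    ⟨_, range fun x => {x}, forall_mem_range.mpr (isKMeager_singleton hκ),
      eq_univ_of_forall fun x => mem_sUnion.mpr ⟨_, mem_range_self x, rfl⟩, rfl⟩

lemma addM_le_covM (hinacc : κ.IsInaccessible) : addM κ ≤ covM κ := by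
  obtain ⟨J, hJ, hu, hc⟩ := exists_cover_mk_eq_covM hinacc.isRegular.aleph0_le
  exact hc ▸ addM_le_mk hJ (hu ▸ not_isKMeager_univ hinacc)

lemma addM_le_bK (hinacc : κ.IsInaccessible) : addM κ ≤ bK κ := by
  have hreg := hinacc.isRegular
  have hκ := hreg.aleph0_le
  choose L hL using IntervalPartition.exists_outruns hreg
  refine le_csInf ⟨_, Set.univ, fun g => ⟨g, trivial, fun ⟨α, hα⟩ =>
    (hα ⟨α.1 + 1, add_one_lt_ord hκ α.2⟩ (lt_add_one α.1)).false⟩, rfl⟩ ?_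
  rintro _ ⟨F, hF, rfl⟩
  let x₀ : GenCantor κ := fun _ => false
  refine (addM_le_mk (J := (fun f => (MatchSet κ x₀ (L f))ᶜ) '' F)
    (forall_mem_image.mpr fun f _ => isKMeager_compl_matchSet hκ x₀ (L f)) fun hU => ?_).trans
    mk_image_le
  obtain ⟨y, K, hK⟩ := hU.exists_subset_compl_matchSet hinacc
  obtain ⟨f, hf, hnot⟩ := hF (K.rightEnd hκ)
  exact hnot ((hL f).evDom_rightEnd hκ (ipDom_of_matchSet_subset hκ
    (compl_subset_compl.mp ((subset_sUnion_of_mem (mem_image_of_mem _ hf)).trans hK))))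

lemma min_le_addM (hinacc : κ.IsInaccessible) : min (bK κ) (covM κ) ≤ addM κ := by
  have hreg := hinacc.isRegular
  have hκ := hreg.aleph0_le
  choose L hL using IntervalPartition.exists_outruns hreg
  obtain ⟨J₀, hJ₀, hu, -⟩ := exists_cover_mk_eq_covM hκ
  refine le_csInf ⟨_, J₀, hJ₀, hu ▸ not_isKMeager_univ hinacc, rfl⟩ ?_
  rintro _ ⟨J, hJ, hnot, rfl⟩
  by_contra! hlt
  obtain ⟨hb, hcov⟩ := lt_min_iff.mp hlt
  apply hnot
  choose x I hxI using fun A : J => (hJ A A.2).exists_subset_compl_matchSet hinacc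
  obtain ⟨y, hy⟩ : ∃ y, ∀ A : J, y ∈ MatchSet κ (x A) (I A) := by
    by_contra! h
    refine sUnion_ne_univ_of_mk_lt_covM (J := range fun A : J => (MatchSet κ (x A) (I A))ᶜ)
      (forall_mem_range.mpr fun A => isKMeager_compl_matchSet hκ _ _)
      (mk_range_le.trans_lt hcov) (eq_univ_of_forall fun z => ?_)
    obtain ⟨A, hA⟩ := h z
    exact mem_sUnion.mpr ⟨_, mem_range_self A, hA⟩
  choose h hh using fun A : J => exists_matchSet_subset_of_evDom hreg (hy A)
  obtain ⟨g, hg⟩ := exists_evDom_of_mk_lt_bK (F := range h) (mk_range_le.trans_lt hb)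
  refine (isKMeager_compl_matchSet hκ y (L g)).mono fun z hz hzM => ?_
  obtain ⟨A, hA, hzA⟩ := mem_sUnion.mp hz
  exact hxI ⟨A, hA⟩ hzA (hh ⟨A, hA⟩ g (L g) (hg _ (mem_range_self _)) (hL g) hzM)

section Cofinal
variable (hinacc : κ.IsInaccessible) {J : Set (Set (GenCantor κ))}
  (hJ : ∀ A ∈ J, IsKMeager κ A) (hcof : ∀ A, IsKMeager κ A → ∃ B ∈ J, A ⊆ B)
include hinacc hJ hcof

lemma dK_le_mk_of_cofinal : dK κ ≤ #J := by
  have hreg := hinacc.isRegular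
  have hκ := hreg.aleph0_le
  choose L hL using IntervalPartition.exists_outruns hreg
  choose x I hxI using fun A : J => (hJ A A.2).exists_subset_compl_matchSet hinacc
  refine (dK_le_mk (F := range fun A : J => (I A).rightEnd hκ) fun g => ?_).trans mk_range_le
  obtain ⟨B, hB, hsub⟩ := hcof _ (isKMeager_compl_matchSet hκ (fun _ => false) (L g))
  exact ⟨_, mem_range_self ⟨B, hB⟩, (hL g).evDom_rightEnd hκ
    (ipDom_of_matchSet_subset hκ (compl_subset_compl.mp (hsub.trans (hxI ⟨B, hB⟩))))⟩

lemma nonM_le_mk_of_cofinal : nonM κ ≤ #J := by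
  have hne : ∀ A : J, ∃ z, z ∉ A.1 := fun A => by
    by_contra! h
    exact not_isKMeager_univ hinacc ((hJ A A.2).mono fun z _ => h z)
  choose z hz using hne
  refine (nonM_le_mk (X := range z) fun hm => ?_).trans mk_range_le
  obtain ⟨B, hB, hsub⟩ := hcof _ hm
  exact hz ⟨B, hB⟩ (hsub (mem_range_self _))

end Cofinal

lemma max_le_cofM (hinacc : κ.IsInaccessible) : max (dK κ) (nonM κ) ≤ cofM κ := by
  refine le_csInf ⟨_, {A | IsKMeager κ A}, fun _ h => h, fun A hA => ⟨A, hA, subset_rfl⟩, rfl⟩ ?_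
  rintro _ ⟨J, hJ, hcof, rfl⟩
  exact max_le (dK_le_mk_of_cofinal hinacc hJ hcof) (nonM_le_mk_of_cofinal hinacc hJ hcof)

lemma cofM_le_max (hinacc : κ.IsInaccessible) : cofM κ ≤ max (dK κ) (nonM κ) := by
  have hreg := hinacc.isRegular
  have hκ := hreg.aleph0_le
  choose L hL using IntervalPartition.exists_outruns hreg
  obtain ⟨F, hF, hdK⟩ := exists_dominating_mk_eq_dK hκ
  obtain ⟨X, hX, hnonM⟩ := exists_not_isKMeager_mk_eq_nonM hinacc
  have hcof : ∀ A, IsKMeager κ A →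
      ∃ B ∈ range fun p : X × F => (MatchSet κ p.1 (L p.2))ᶜ, A ⊆ B := fun A hA => by
    obtain ⟨x, I, hxI⟩ := hA.exists_subset_compl_matchSet hinacc
    obtain ⟨y, hyX, hyM⟩ : ∃ y ∈ X, y ∈ MatchSet κ x I := by
      by_contra! h
      exact hX ((isKMeager_compl_matchSet hκ x I).mono h)
    obtain ⟨h, hh⟩ := exists_matchSet_subset_of_evDom hreg hyM
    obtain ⟨f, hf, hhf⟩ := hF h
    exact ⟨_, mem_range_self (⟨y, hyX⟩, ⟨f, hf⟩),
      hxI.trans (compl_subset_compl.mpr (hh f (L f) hhf (hL f)))⟩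
  have hXinf : ℵ₀ ≤ #X := by
    by_contra! h
    exact hX (isKMeager_of_mk_le hκ (h.le.trans (aleph0_le_lift.mpr hκ)))
  have hF0 : #F ≠ 0 := mk_ne_zero_iff.mpr ⟨⟨_, (hF fun β => β).choose_spec.1⟩⟩
  calc cofM κ ≤ #(X × F) :=
        (cofM_le_mk (forall_mem_range.mpr fun _ => isKMeager_compl_matchSet hκ _ _) hcof).trans
          mk_range_le
    _ = max (dK κ) (nonM κ) := by
      rw [mk_prod, Cardinal.lift_id, Cardinal.lift_id, mul_eq_max_of_aleph0_le_left hXinf hF0,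
        hdK, hnonM, max_comm]

end

theorem addM_eq_min_and_cofM_eq_max (κ : Cardinal.{0}) (hinacc : κ.IsInaccessible) :
    addM κ = min (bK κ) (covM κ) ∧ cofM κ = max (dK κ) (nonM κ) :=
  ⟨le_antisymm (le_min (addM_le_bK hinacc) (addM_le_covM hinacc)) (min_le_addM hinacc),
    le_antisymm (cofM_le_max hinacc) (max_le_cofM hinacc)⟩

end GenCichon
end

section
/- Assume κ is strongly inaccessible. Let X ⊆ 2^κ be a nonempty open set and let λ < κ be a cardinal. Then there is a family 𝒴 of open subsets of X such that (i) |𝒴| ≤ κ, (ii) every dense open subset of 2^κ contains a member of 𝒴, and (iii) ⋂𝒴' ≠ ∅ for every 𝒴' ⊆ 𝒴 with |𝒴'| ≤ λ. -/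
/-!
Fix a cylinder `[x₀ ↾ δ₀] ⊆ X` and let `μ = (max λ ℵ₀)⁺`, a regular cardinal below `κ`. The
members of `𝒴` are the sets `[x₀ ↾ δ₀] ∩ ⋃_{ν < μ} {y | y = u_ν on [a_ν, b_ν)}` for increasing,
disjoint intervals `[a_ν, b_ν)` above `δ₀`; as `κ` is a strong limit there are only `κ` of them.
For a dense open `D`, a Baire category argument over the `2 ^ |δ| < κ` possible values below `δ`
gives, above every `δ`, an interval pattern forcing membership in `D`; stacking `μ` of these
gives a member of `𝒴` inside `D`. Given at most `λ < μ` members, treat them in increasing order of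
the suprema of their intervals and pick for each an interval above all those picked before
(possible since that supremum has cofinality `μ`); the picked intervals are disjoint, so one point
follows all their patterns.
-/

universe u v

open Cardinal Set

theorem WellFounded.exists_forall_mem_of_nonempty {ι α : Type*} [Nonempty α]
    {r : ι → ι → Prop} (hr : WellFounded r) (S : ι → (ι → α) → Set α)
    (hS : ∀ i f g, (∀ j, r j i → f j = g j) → S i f = S i g)
    (hne : ∀ i f, (∀ j, r j i → f j ∈ S j f) → (S i f).Nonempty) :
    ∃ f : ι → α, ∀ i, f i ∈ S i f := by
  classical
  let F : ι → α := hr.fix fun i prev =>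
    Classical.epsilon (· ∈ S i fun j => if h : r j i then prev j h else Classical.arbitrary α)
  have hF : ∀ i, F i = Classical.epsilon (· ∈ S i F) := fun i => by
    refine (hr.fix_eq _ i).trans ?_
    rw [hS i _ F]
    exact fun j hj => dif_pos hj
  exact ⟨F, fun i => hr.induction (C := fun i => F i ∈ S i F) i fun i IH => by
    rw [hF i]
    exact Classical.epsilon_spec (hne i F IH)⟩

theorem Cardinal.IsRegular.exists_forall_le_lt_ord {c : Cardinal.{u}} (hc : c.IsRegular)
    {ι : Type v} (f : ι → Ordinal.{u}) (hι : Cardinal.lift.{u} #ι < Cardinal.lift.{v} c)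
    (hf : ∀ i, f i < c.ord) : ∃ b < c.ord, ∀ i, f i ≤ b := by
  refine ⟨⨆ i, f i, Ordinal.lift_iSup_lt_of_lt_cof ?_ hf,
    le_ciSup ⟨c.ord, forall_mem_range.2 fun i => (hf i).le⟩⟩
  rwa [← Ordinal.lift_cof, hc.cof_ord]

theorem Cardinal.IsStrongLimit.lift {c : Cardinal.{u}} (hc : c.IsStrongLimit) :
    (lift.{v} c).IsStrongLimit := by
  refine ⟨lift_eq_zero.not.2 hc.ne_zero, fun x hx => ?_⟩
  obtain ⟨x, -, rfl⟩ := lt_lift_iff.1 hx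
  rw [← lift_two.{v, u}, ← lift_power, lift_lt]
  exact hc.isStrongPrelimit (lift_lt.1 hx)

theorem Cardinal.IsStrongLimit.power_lt {a b c : Cardinal} (hc : c.IsStrongLimit)
    (ha : a < c) (hb : b < c) : a ^ b < c :=
  calc a ^ b ≤ (2 ^ a) ^ b := power_le_power_right (cantor a).le
    _ = 2 ^ (a * b) := power_mul.symm
    _ < c := hc.isStrongPrelimit (mul_lt_of_lt hc.aleph0_le ha hb)

theorem exists_isWellOrder_forall_le {ι : Type*} (f : ι → Ordinal) :
    ∃ r : ι → ι → Prop, IsWellOrder ι r ∧ ∀ i j, r i j → f i ≤ f j := by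
  let e : ι ↪ Ordinal × ι := ⟨fun i => (f i, i), fun i j h => (Prod.ext_iff.1 h).2⟩
  refine ⟨e ⁻¹'o Prod.Lex (· < ·) WellOrderingRel,
    (RelEmbedding.preimage e _).isWellOrder, fun i j h => ?_⟩
  rcases Prod.lex_def.1 h with h | ⟨h, -⟩
  exacts [h.le, h.le]

namespace GenCichon

variable {κ : Cardinal.{0}}

noncomputable def toOrdFun (x : GenCantor κ) (o : Ordinal) : Bool :=
  if h : o < κ.ord then x ⟨o, h⟩ else false

@[simp]
lemma toOrdFun_coe (x : GenCantor κ) (β : Idx κ) : toOrdFun x β.1 = x β := dif_pos β.2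

lemma IsOpenK.exists_cyl_subset {X : Set (GenCantor κ)} (hX : IsOpenK κ X) {x : GenCantor κ}
    (hx : x ∈ X) : ∃ δ < κ.ord, cyl κ δ (toOrdFun x) ⊆ X := by
  obtain ⟨δ, hδ, h⟩ := hX x hx
  exact ⟨δ, hδ, fun y hy => h fun β hβ => (hy β hβ).trans (toOrdFun_coe x β)⟩

lemma cyl_subset_cyl {ℓ ℓ' : Ordinal} {σ σ' : Ordinal → Bool} (h : ℓ' ≤ ℓ)
    (hσ : ∀ β : Idx κ, β.1 < ℓ' → σ β.1 = σ' β.1) : cyl κ ℓ σ ⊆ cyl κ ℓ' σ' :=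
  fun _ hy β hβ => (hy β (hβ.trans_le h)).trans (hσ β hβ)

lemma eq_of_cyl_subset_cyl {ℓ ℓ' : Ordinal} {σ σ' : Ordinal → Bool}
    (h : cyl κ ℓ σ ⊆ cyl κ ℓ' σ') (β : Idx κ) (hβ : β.1 < ℓ') : σ β.1 = σ' β.1 :=
  h (fun _ _ => rfl) β hβ

lemma exists_cyl_subset_of_chain (hκ : κ.IsRegular) {ι : Type 1}
    (c : ι → Ordinal × (Ordinal → Bool)) (hι : #ι < lift.{1} κ) (hc : ∀ i, (c i).1 < κ.ord)
    (hchain : ∀ i j, cyl κ (c i).1 (c i).2 ⊆ cyl κ (c j).1 (c j).2 ∨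
      cyl κ (c j).1 (c j).2 ⊆ cyl κ (c i).1 (c i).2) :
    ∃ ℓ < κ.ord, ∃ σ, ∀ i, cyl κ ℓ σ ⊆ cyl κ (c i).1 (c i).2 := by
  classical
  obtain ⟨ℓ, hℓ, hle⟩ := hκ.exists_forall_le_lt_ord (fun i => (c i).1) (by simpa using hι) hc
  let σ : Ordinal → Bool := fun o => if h : ∃ i, o < (c i).1 then (c h.choose).2 o else false
  refine ⟨ℓ, hℓ, σ, fun i => cyl_subset_cyl (hle i) fun β hβ => ?_⟩
  have h : ∃ j, β.1 < (c j).1 := ⟨i, hβ⟩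
  simp only [σ, dif_pos h]
  rcases hchain h.choose i with hs | hs
  · exact eq_of_cyl_subset_cyl hs β hβ
  · exact (eq_of_cyl_subset_cyl hs β h.choose_spec).symm

lemma IsDenseK.exists_cyl_subset_inter {D : Set (GenCantor κ)} (hD : IsDenseK κ D)
    (hDo : IsOpenK κ D) {ℓ : Ordinal} (hℓ : ℓ < κ.ord) (σ : Ordinal → Bool) :
    ∃ ℓ' < κ.ord, ∃ σ', cyl κ ℓ' σ' ⊆ cyl κ ℓ σ ∩ D := by
  obtain ⟨y, hyσ, hyD⟩ := hD ℓ hℓ σ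
  obtain ⟨δ, hδ, hδD⟩ := hDo.exists_cyl_subset hyD
  refine ⟨max ℓ δ, max_lt hℓ hδ, toOrdFun y, fun z hz => ⟨?_, hδD ?_⟩⟩
  · exact cyl_subset_cyl (le_max_left _ _) (fun β hβ => (toOrdFun_coe y β).trans (hyσ β hβ)) hz
  · exact cyl_subset_cyl (le_max_right _ _) (fun _ _ => rfl) hz

lemma exists_cyl_subset_iInter (hκ : κ.IsRegular) {ι : Type 1} (hι : #ι < lift.{1} κ)
    {D : ι → Set (GenCantor κ)} (hDo : ∀ i, IsOpenK κ (D i)) (hD : ∀ i, IsDenseK κ (D i)) :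
    ∃ ℓ < κ.ord, ∃ σ, cyl κ ℓ σ ⊆ ⋂ i, D i := by
  let r : ι → ι → Prop := WellOrderingRel
  let S : ι → (ι → Ordinal × (Ordinal → Bool)) → Set (Ordinal × (Ordinal → Bool)) :=
    fun i c => {a | a.1 < κ.ord ∧ cyl κ a.1 a.2 ⊆ D i ∧
      ∀ j, r j i → cyl κ a.1 a.2 ⊆ cyl κ (c j).1 (c j).2}
  have chain : ∀ c i j, c i ∈ S i c → c j ∈ S j c →
      cyl κ (c i).1 (c i).2 ⊆ cyl κ (c j).1 (c j).2 ∨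
        cyl κ (c j).1 (c j).2 ⊆ cyl κ (c i).1 (c i).2 := by
    intro c i j hi hj
    rcases trichotomous_of r i j with h | rfl | h
    exacts [Or.inr (hj.2.2 i h), Or.inl subset_rfl, Or.inl (hi.2.2 j h)]
  obtain ⟨c, hc⟩ := (IsWellFounded.wf : WellFounded r).exists_forall_mem_of_nonempty S
    (fun i c c' h => by simp +contextual only [S, h]) fun i c hc => by
      obtain ⟨ℓ, hℓ, σ, hsub⟩ := exists_cyl_subset_of_chain hκ (fun j : {j // r j i} => c j)
        ((mk_subtype_le _).trans_lt hι) (fun j => (hc j j.2).1)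
        fun j k => chain c j k (hc j j.2) (hc k k.2)
      obtain ⟨ℓ', hℓ', σ', hsub'⟩ := (hD i).exists_cyl_subset_inter (hDo i) hℓ σ
      exact ⟨(ℓ', σ'), hℓ', fun y hy => (hsub' hy).2, fun j hj y hy => hsub ⟨j, hj⟩ (hsub' hy).1⟩
  obtain ⟨ℓ, hℓ, σ, hsub⟩ := exists_cyl_subset_of_chain hκ c hι (fun i => (hc i).1)
    fun i j => chain c i j (hc i) (hc j)
  exact ⟨ℓ, hℓ, σ, subset_iInter fun i => (hsub i).trans (hc i).2.1⟩

noncomputable def splice (δ : Ordinal) (t : Iio δ → Bool) (y : GenCantor κ) : GenCantor κ :=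
  fun β => if h : β.1 < δ then t ⟨β.1, h⟩ else y β

lemma IsOpenK.preimage_splice {D : Set (GenCantor κ)} (hD : IsOpenK κ D) (δ : Ordinal)
    (t : Iio δ → Bool) : IsOpenK κ (splice δ t ⁻¹' D) := by
  intro y hy
  obtain ⟨δ', hδ', h⟩ := hD _ hy
  refine ⟨δ', hδ', fun y' hy' => h fun β hβ => ?_⟩
  simp only [splice]
  split_ifs
  exacts [rfl, hy' β hβ]

lemma IsDenseK.preimage_splice {D : Set (GenCantor κ)} (hD : IsDenseK κ D) {δ : Ordinal}
    (hδ : δ < κ.ord) (t : Iio δ → Bool) : IsDenseK κ (splice δ t ⁻¹' D) := by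
  intro ℓ hℓ σ
  obtain ⟨z, hz, hzD⟩ := hD (max δ ℓ) (max_lt hδ hℓ) fun o => if h : o < δ then t ⟨o, h⟩ else σ o
  refine ⟨fun β => if β.1 < δ then σ β.1 else z β, fun β hβ => ?_, ?_⟩
  · dsimp only
    split_ifs with h
    · rfl
    · simpa [h] using hz β (lt_max_of_lt_right hβ)
  · rw [mem_preimage]
    convert hzD using 1
    funext β
    show (if h : β.1 < δ then t ⟨β.1, h⟩ else if β.1 < δ then σ β.1 else z β) = z β
    split_ifs with h
    · simpa [h] using (hz β (lt_max_of_lt_left h)).symm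
    · rfl

variable (κ) in
def cylIco (d e : Ordinal) (σ : Ordinal → Bool) : Set (GenCantor κ) :=
  {y | ∀ β : Idx κ, d ≤ β.1 → β.1 < e → y β = σ β.1}

/-- A cylinder inside all `2 ^ |δ| < κ` dense open sets `splice δ t ⁻¹' D` fixes a pattern on
`[δ, e)` that forces membership in `D` whatever happens below `δ`. -/
lemma IsDenseK.exists_cylIco_subset (hreg : κ.IsRegular) (hsl : κ.IsStrongLimit)
    {D : Set (GenCantor κ)} (hD : IsDenseK κ D) (hDo : IsOpenK κ D) {δ : Ordinal}
    (hδ : δ < κ.ord) : ∃ e < κ.ord, δ < e ∧ ∃ σ, cylIco κ δ e σ ⊆ D := by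
  have hsmall : #(Iio δ → Bool) < lift.{1} κ := by
    rw [mk_arrow, mk_bool, lift_two, lift_uzero, mk_Iio_ordinal]
    exact hsl.lift.isStrongPrelimit (lift_lt.2 (lt_ord.1 hδ))
  obtain ⟨ℓ, hℓ, σ, hsub⟩ := exists_cyl_subset_iInter hreg hsmall
    (fun t => hDo.preimage_splice δ t) fun t => hD.preimage_splice hδ t
  refine ⟨max ℓ (Order.succ δ), max_lt hℓ ((isSuccLimit_ord hreg.aleph0_le).succ_lt hδ),
    (Order.lt_succ δ).trans_le (le_max_right _ _), σ, fun y hy => ?_⟩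
  have hw : splice δ (fun o => σ o.1) y ∈ cyl κ ℓ σ := fun β hβ => by
    simp only [splice]
    split_ifs with h
    exacts [rfl, hy β (not_lt.1 h) (hβ.trans_le (le_max_left _ _))]
  have hy' := mem_iInter.1 (hsub hw) fun o => toOrdFun y o.1
  rw [mem_preimage] at hy'
  convert hy' using 1
  funext β
  simp only [splice]
  split_ifs <;> simp

variable (κ) in
/-- Each member of the family is read off from a `Param`; bounding all the data by one `B < κ`
makes `#(Param κ μ) ≤ κ` a sum of `κ` cardinals below `κ`. -/
def Param (μ : Cardinal.{0}) : Type 1 :=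
  Σ B : Iio κ.ord, Iio μ.ord → Iio B.1 × Iio B.1 × (Iio B.1 → Bool)

lemma mk_param_le (hsl : κ.IsStrongLimit) {μ : Cardinal.{0}} (hμ : μ < κ) :
    #(Param κ μ) ≤ lift.{1} κ := by
  have hK : (lift.{1} κ).IsStrongLimit := hsl.lift
  have hlt : ∀ o < κ.ord, #(Iio o) < lift.{1} κ := fun o ho => by
    rw [mk_Iio_ordinal, lift_lt]
    exact lt_ord.1 ho
  have hsummand : ∀ B : Iio κ.ord,
      #(Iio μ.ord → Iio B.1 × Iio B.1 × (Iio B.1 → Bool)) ≤ lift.{1} κ := fun B => by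
    have hB := hlt B.1 B.2
    have hbool : #(Iio B.1 → Bool) < lift.{1} κ := by
      rw [mk_arrow, mk_bool, lift_two, lift_uzero]
      exact hK.isStrongPrelimit hB
    have hT : #(Iio B.1 × Iio B.1 × (Iio B.1 → Bool)) < lift.{1} κ := by
      simp only [mk_prod, lift_id]
      exact mul_lt_of_lt hK.aleph0_le hB (mul_lt_of_lt hK.aleph0_le hB hbool)
    rw [← power_def]
    exact (hK.power_lt hT (hlt μ.ord (ord_lt_ord.2 hμ))).le
  calc #(Param κ μ)
        = sum fun B : Iio κ.ord => #(Iio μ.ord → Iio B.1 × Iio B.1 × (Iio B.1 → Bool)) :=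
        mk_sigma _
    _ ≤ sum fun _ : Iio κ.ord => lift.{1} κ := sum_le_sum _ _ hsummand
    _ = lift.{1} κ := by
      rw [sum_const', mk_Iio_ordinal, card_ord, mul_eq_self (aleph0_le_lift.2 hsl.aleph0_le)]

namespace Param

variable {μ : Cardinal.{0}} (p : Param κ μ)

def left (ν : Iio μ.ord) : Ordinal := (p.2 ν).1

def right (ν : Iio μ.ord) : Ordinal := (p.2 ν).2.1

noncomputable def pattern (ν : Iio μ.ord) (o : Ordinal) : Bool :=
  if h : o < p.1 then (p.2 ν).2.2 ⟨o, h⟩ else false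

lemma right_lt_ord (ν : Iio μ.ord) : p.right ν < κ.ord := (p.2 ν).2.1.2.trans p.1.2

def toSet (δ₀ : Ordinal) (σ₀ : Ordinal → Bool) : Set (GenCantor κ) :=
  cyl κ δ₀ σ₀ ∩ ⋃ ν, cylIco κ (p.left ν) (p.right ν) (p.pattern ν)

lemma isOpenK_toSet {δ₀ : Ordinal} (hδ₀ : δ₀ < κ.ord) (σ₀ : Ordinal → Bool) :
    IsOpenK κ (p.toSet δ₀ σ₀) := by
  rintro y ⟨hy₀, hy⟩
  obtain ⟨ν, hν⟩ := mem_iUnion.1 hy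
  refine ⟨max δ₀ (p.right ν), max_lt hδ₀ (p.right_lt_ord ν), fun y' hy' => ⟨fun β hβ => ?_,
    mem_iUnion.2 ⟨ν, fun β h₁ h₂ => ?_⟩⟩⟩
  · exact (hy' β (lt_max_of_lt_left hβ)).trans (hy₀ β hβ)
  · exact (hy' β (lt_max_of_lt_right h₂)).trans (hν β h₁ h₂)

structure IsAdmissible (δ₀ : Ordinal) : Prop where
  le_left : ∀ ν, δ₀ ≤ p.left ν
  left_lt_right : ∀ ν, p.left ν < p.right ν
  right_le_left : ∀ ⦃ν ν'⦄, ν < ν' → p.right ν ≤ p.left ν'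

noncomputable def sup : Ordinal := ⨆ ν, p.left ν

variable {p}

lemma IsAdmissible.left_strictMono {δ₀ : Ordinal} (hp : p.IsAdmissible δ₀) :
    StrictMono p.left :=
  fun ν _ h => (hp.left_lt_right ν).trans_le (hp.right_le_left h)

lemma left_le_sup (ν : Iio μ.ord) : p.left ν ≤ p.sup :=
  le_ciSup (f := p.left) ⟨p.1.1, forall_mem_range.2 fun ν => (p.2 ν).1.2.le⟩ ν

lemma IsAdmissible.right_lt_sup {δ₀ : Ordinal} (hp : p.IsAdmissible δ₀) (hμ : ℵ₀ ≤ μ)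
    (ν : Iio μ.ord) : p.right ν < p.sup := by
  have hlim := isSuccLimit_ord hμ
  let ν₁ : Iio μ.ord := ⟨Order.succ ν.1, hlim.succ_lt ν.2⟩
  let ν₂ : Iio μ.ord := ⟨Order.succ ν₁.1, hlim.succ_lt ν₁.2⟩
  calc p.right ν ≤ p.left ν₁ := hp.right_le_left (Order.lt_succ ν.1)
    _ < p.left ν₂ := hp.left_strictMono (Order.lt_succ ν₁.1)
    _ ≤ p.sup := left_le_sup ν₂

lemma exists_lt_left_of_lt_sup (hμ : μ ≠ 0) {b : Ordinal} (hb : b < p.sup) :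
    ∃ ν, b < p.left ν :=
  have : Nonempty (Iio μ.ord) := ⟨⟨0, ord_pos.2 (pos_iff_ne_zero.2 hμ)⟩⟩
  exists_lt_of_lt_ciSup hb

end Param

theorem exists_isAdmissible_toSet_subset (hreg : κ.IsRegular) (hsl : κ.IsStrongLimit)
    {μ : Cardinal.{0}} (hμ : μ < κ) {δ₀ : Ordinal} (hδ₀ : δ₀ < κ.ord) (σ₀ : Ordinal → Bool)
    {D : Set (GenCantor κ)} (hD : IsDenseK κ D) (hDo : IsOpenK κ D) :
    ∃ p : Param κ μ, p.IsAdmissible δ₀ ∧ p.toSet δ₀ σ₀ ⊆ D := by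
  have hsmall : #(Iio μ.ord) < lift.{1} κ := by
    rwa [mk_Iio_ordinal, card_ord, lift_lt]
  let S : Iio μ.ord → (Iio μ.ord → Ordinal × Ordinal × (Ordinal → Bool)) →
      Set (Ordinal × Ordinal × (Ordinal → Bool)) := fun ν c =>
    {a | δ₀ ≤ a.1 ∧ a.1 < a.2.1 ∧ a.2.1 < κ.ord ∧ (∀ ξ < ν, (c ξ).2.1 ≤ a.1) ∧
      cylIco κ a.1 a.2.1 a.2.2 ⊆ D}
  obtain ⟨c, hc⟩ := wellFounded_lt.exists_forall_mem_of_nonempty S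
    (fun ν c c' h => by simp +contextual only [S, h]) fun ν c hc => by
      obtain ⟨b, hb, hbc⟩ := hreg.exists_forall_le_lt_ord (fun ξ : {ξ // ξ < ν} => (c ξ).2.1)
        (by simpa using (mk_subtype_le _).trans_lt hsmall) fun ξ => (hc ξ ξ.2).2.2.1
      obtain ⟨e, he, hde, σ, hσ⟩ := hD.exists_cylIco_subset hreg hsl hDo (max_lt hδ₀ hb)
      exact ⟨(max δ₀ b, e, σ), le_max_left _ _, hde, he,
        fun ξ hξ => (hbc ⟨ξ, hξ⟩).trans (le_max_right _ _), hσ⟩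
  obtain ⟨b, hb, hbc⟩ := hreg.exists_forall_le_lt_ord (fun ν => (c ν).2.1)
    (by simpa using hsmall) fun ν => (hc ν).2.2.1
  have hB : Order.succ b < κ.ord := (isSuccLimit_ord hreg.aleph0_le).succ_lt hb
  have hright : ∀ ν, (c ν).2.1 < Order.succ b := fun ν => (hbc ν).trans_lt (Order.lt_succ b)
  let p : Param κ μ := ⟨⟨Order.succ b, hB⟩, fun ν =>
    (⟨(c ν).1, (hc ν).2.1.trans (hright ν)⟩, ⟨(c ν).2.1, hright ν⟩, fun o => (c ν).2.2 o.1)⟩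
  refine ⟨p, ⟨fun ν => (hc ν).1, fun ν => (hc ν).2.1, fun ν ν' h => (hc ν').2.2.2.1 ν h⟩,
    fun y hy => ?_⟩
  obtain ⟨ν, hν⟩ := mem_iUnion.1 hy.2
  exact (hc ν).2.2.2.2 fun β h₁ h₂ => (hν β h₁ h₂).trans (dif_pos (h₂.trans (hright ν)))

theorem exists_forall_mem_toSet {μ : Cardinal.{0}} (hμ : μ.IsRegular) {ι : Type 1} (p : ι → Param κ μ)
    (hι : #ι < lift.{1} μ) {δ₀ : Ordinal} (hp : ∀ i, (p i).IsAdmissible δ₀)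
    (σ₀ : Ordinal → Bool) : ∃ y, ∀ i, y ∈ (p i).toSet δ₀ σ₀ := by
  classical
  obtain ⟨r, hr, hrsup⟩ := exists_isWellOrder_forall_le fun i => (p i).sup
  have : Nonempty (Iio μ.ord) := ⟨⟨0, ord_pos.2 hμ.pos⟩⟩
  let S : ι → (ι → Iio μ.ord) → Set (Iio μ.ord) := fun i ν =>
    {ν' | ∀ j, r j i → (p j).right (ν j) ≤ (p i).left ν'}
  obtain ⟨ν, hν⟩ := hr.wf.exists_forall_mem_of_nonempty S
    (fun i ν ν' h => by simp +contextual only [S, h]) fun i ν _ => by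
      have : ∀ j : {j // r j i}, ∃ ξ, (p j).right (ν j) < (p i).left ξ := fun j =>
        Param.exists_lt_left_of_lt_sup hμ.pos.ne'
          (((hp j).right_lt_sup hμ.aleph0_le _).trans_le (hrsup _ _ j.2))
      choose ξ hξ using this
      obtain ⟨b, hb, hbξ⟩ := hμ.exists_forall_le_lt_ord (fun j => (ξ j).1)
        (by simpa using (mk_subtype_le _).trans_lt hι) fun j => (ξ j).2
      exact ⟨⟨b, hb⟩, fun j hj =>
        (hξ ⟨j, hj⟩).le.trans ((hp i).left_strictMono.monotone (hbξ ⟨j, hj⟩))⟩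
  let I : ι → Set Ordinal := fun i => Ico ((p i).left (ν i)) ((p i).right (ν i))
  have hdisj : ∀ i j o, o ∈ I i → o ∈ I j → i = j := by
    rintro i j o ⟨hi₁, hi₂⟩ ⟨hj₁, hj₂⟩
    rcases trichotomous_of r i j with h | h | h
    · exact absurd ((hν j i h).trans hj₁) hi₂.not_ge
    · exact h
    · exact absurd ((hν i j h).trans hi₁) hj₂.not_ge
  let y : GenCantor κ := fun β =>
    if h : ∃ i, β.1 ∈ I i then (p h.choose).pattern (ν h.choose) β.1 else σ₀ β.1
  refine ⟨y, fun i => ⟨fun β hβ => dif_neg ?_, mem_iUnion.2 ⟨ν i, fun β h₁ h₂ => ?_⟩⟩⟩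
  · rintro ⟨j, hj, -⟩
    exact (hβ.trans_le ((hp j).le_left _)).not_ge hj
  · have h : ∃ j, β.1 ∈ I j := ⟨i, h₁, h₂⟩
    have hi := hdisj _ _ _ h.choose_spec ⟨h₁, h₂⟩
    simp only [y, dif_pos h]
    rw [hi]

theorem main_lemma_open_family (κ : Cardinal.{0}) (hinacc : κ.IsInaccessible)
    (X : Set (GenCantor κ)) (hX : IsOpenK κ X) (hne : X.Nonempty)
    (lam : Cardinal.{0}) (hlam : lam < κ) :
    ∃ 𝒴 : Set (Set (GenCantor κ)),
      (∀ Y ∈ 𝒴, IsOpenK κ Y ∧ Y ⊆ X) ∧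
      #𝒴 ≤ Cardinal.lift.{1} κ ∧
      (∀ D : Set (GenCantor κ), IsOpenK κ D → IsDenseK κ D → ∃ Y ∈ 𝒴, Y ⊆ D) ∧
      (∀ 𝒴' ⊆ 𝒴, #𝒴' ≤ Cardinal.lift.{1} lam → (⋂₀ 𝒴').Nonempty) := by
  obtain ⟨hℵ₀, hreg, hsl⟩ := isInaccessible_def.1 hinacc
  obtain ⟨x₀, hx₀⟩ := hne
  obtain ⟨δ₀, hδ₀, hX₀⟩ := hX.exists_cyl_subset hx₀
  set μ := Order.succ (max lam ℵ₀)
  have hμ : μ.IsRegular := isRegular_succ (le_max_right _ _)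
  have hlamμ : lam < μ := (le_max_left _ _).trans_lt (Order.lt_succ _)
  have hμκ : μ < κ :=
    (Order.succ_le_of_lt (cantor _)).trans_lt (hsl.isStrongPrelimit (max_lt hlam hℵ₀))
  refine ⟨(fun p : Param κ μ => p.toSet δ₀ (toOrdFun x₀)) '' {p | p.IsAdmissible δ₀},
    ?_, ?_, ?_, ?_⟩
  · rintro _ ⟨p, -, rfl⟩
    exact ⟨p.isOpenK_toSet hδ₀ _, inter_subset_left.trans hX₀⟩
  · exact mk_image_le.trans ((mk_set_le _).trans (mk_param_le hsl hμκ))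
  · intro D hDo hD
    obtain ⟨p, hp, hpD⟩ := exists_isAdmissible_toSet_subset hreg hsl hμκ hδ₀ _ hD hDo
    exact ⟨_, mem_image_of_mem _ hp, hpD⟩
  · intro 𝒴' h𝒴' hcard
    choose p hp hpY using fun Y : 𝒴' => h𝒴' Y.2
    obtain ⟨y, hy⟩ := exists_forall_mem_toSet hμ p (hcard.trans_lt (lift_lt.2 hlamμ)) hp _
    exact ⟨y, fun Y hY => (congrArg (y ∈ ·) (hpY ⟨Y, hY⟩)).mp (hy ⟨Y, hY⟩)⟩

end GenCichon
end
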